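/- arXiv:math/0110139 — 2 statements merged into one kernel-verified Lean document; each statement's English description precedes it below -/
import Mathlib

section
/- Let φ₋, φ₊ : ℕ≥1 → ℝ be two solutions of the discrete Schrödinger equation u(n+1) + u(n−1) + V(n) u(n) = λ u(n) whose discrete Wronskian W(φ₋, φ₊)(n) = φ₋(n) φ₊(n+1) − φ₋(n+1) φ₊(n) equals 1 for all n. Then for every integer L ≥ 1, ‖φ₋‖_L · ‖φ₊‖_L ≥ (L−1)/2, where ‖f‖_L² = Σ_{n=1}^{L} |f(n)|². -/
/-! Summing the Wronskian identity over `n = 1, …, L - 1` and bounding each term by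
`|φ₋(n)| |φ₊(n+1)| + |φ₊(n)| |φ₋(n+1)|` gives `L - 1` on the left. Each of the two resulting
sums pairs a sequence with a shift of the other, so by Cauchy–Schwarz it is at most
`‖φ₋‖_L ‖φ₊‖_L`. -/

open Finset

lemma one_le_abs_mul_add_abs_mul_of_sub_eq_one {a b c d : ℝ} (h : a * d - c * b = 1) :
    1 ≤ |a| * |d| + |b| * |c| := by
  calc (1 : ℝ) = |a * d - c * b| := by rw [h, abs_one]
    _ ≤ |a * d| + |c * b| := abs_sub _ _
    _ = |a| * |d| + |b| * |c| := by rw [abs_mul, abs_mul, mul_comm |c|]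

lemma sum_abs_mul_abs_le_sqrt_mul_sqrt {ι : Type*} (s : Finset ι) (f g : ι → ℝ) :
    ∑ i ∈ s, |f i| * |g i| ≤ √(∑ i ∈ s, f i ^ 2) * √(∑ i ∈ s, g i ^ 2) := by
  simpa only [sq_abs] using Real.sum_mul_le_sqrt_mul_sqrt s (fun i => |f i|) (fun i => |g i|)

lemma sum_Ico_one_le_sum_Icc_one {f : ℕ → ℝ} (hf : ∀ n, 0 ≤ f n) (L : ℕ) :
    ∑ n ∈ Ico 1 L, f n ≤ ∑ n ∈ Icc 1 L, f n :=
  sum_le_sum_of_subset_of_nonneg Ico_subset_Icc_self fun n _ _ => hf n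

lemma sum_Ico_one_succ_le_sum_Icc_one {f : ℕ → ℝ} (hf : ∀ n, 0 ≤ f n) (L : ℕ) :
    ∑ n ∈ Ico 1 L, f (n + 1) ≤ ∑ n ∈ Icc 1 L, f n := by
  rw [sum_Ico_add']
  refine sum_le_sum_of_subset_of_nonneg (fun n hn => ?_) fun n _ _ => hf n
  simp only [mem_Ico, mem_Icc] at hn ⊢
  omega

lemma sum_Ico_abs_mul_abs_succ_le (f g : ℕ → ℝ) (L : ℕ) :
    ∑ n ∈ Ico 1 L, |f n| * |g (n + 1)| ≤
      √(∑ n ∈ Icc 1 L, f n ^ 2) * √(∑ n ∈ Icc 1 L, g n ^ 2) := by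
  refine (sum_abs_mul_abs_le_sqrt_mul_sqrt _ f fun n => g (n + 1)).trans ?_
  gcongr √?_ * √?_
  · exact sum_Ico_one_le_sum_Icc_one (fun n => sq_nonneg (f n)) L
  · exact sum_Ico_one_succ_le_sum_Icc_one (fun n => sq_nonneg (g n)) L

theorem stmt8_general (φm φp : ℕ → ℝ)
    (hW : ∀ n ≥ 1, φm n * φp (n+1) - φm (n+1) * φp n = 1) :
    ∀ L : ℕ, 1 ≤ L →
      ((L:ℝ) - 1) / 2 ≤
        Real.sqrt (∑ n ∈ Finset.Icc 1 L, (φm n)^2) *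
          Real.sqrt (∑ n ∈ Finset.Icc 1 L, (φp n)^2) := by
  intro L hL
  have hcount : ((L : ℝ) - 1) = ∑ n ∈ Ico 1 L, (1 : ℝ) := by
    simp [Nat.cast_sub hL]
  have hterm : ∀ n ∈ Ico 1 L, (1 : ℝ) ≤ |φm n| * |φp (n + 1)| + |φp n| * |φm (n + 1)| :=
    fun n hn => one_le_abs_mul_add_abs_mul_of_sub_eq_one (hW n (mem_Ico.1 hn).1)
  have hsum := sum_le_sum hterm
  rw [sum_add_distrib] at hsum
  have hmp := sum_Ico_abs_mul_abs_succ_le φm φp L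
  have hpm := sum_Ico_abs_mul_abs_succ_le φp φm L
  rw [mul_comm (√_)] at hpm
  linarith

theorem stmt8 (V φm φp : ℕ → ℝ) (lam : ℝ)
    (heqm : ∀ n ≥ 1, φm (n+1) + φm (n-1) + V n * φm n = lam * φm n)
    (heqp : ∀ n ≥ 1, φp (n+1) + φp (n-1) + V n * φp n = lam * φp n)
    (hW : ∀ n ≥ 1, φm n * φp (n+1) - φm (n+1) * φp n = 1) :
    ∀ L : ℕ, 1 ≤ L →
      ((L:ℝ) - 1) / 2 ≤
        Real.sqrt (∑ n ∈ Finset.Icc 1 L, (φm n)^2) *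
          Real.sqrt (∑ n ∈ Finset.Icc 1 L, (φp n)^2) :=
  stmt8_general φm φp hW
end

section
/- Let φ₋, φ₊ : [0,∞) → ℝ with ‖f‖_L² = ∫₀^L |f|² dx. Suppose for some ε > 0 and constants, (i) ‖φ₋‖_L ≤ C₁ L^{1/2+ε} for large L (regularity), (ii) ‖φ₋‖_L ‖φ₊‖_L ≥ c(L−1) for some c > 0 (Wronskian lower bound), and (iii) for every β̃ < β (with 0 < β ≤ 1), ‖φ₋‖_L ≥ ‖φ₊‖_L^{β̃} for all large L. Then there exist constants C₂, C₃, C₄ > 0 such that for large L: C₂ L^{1 − 1/(2β) − ε'} ≤ ‖φ₋‖_L, ‖φ₊‖_L ≤ C₃ L^{1/(2β) + ε'}, and C₄ L^{1/2 − ε'} ≤ ‖φ₊‖_L, where ε' can be made arbitrarily small as ε → 0. -/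
open Filter MeasureTheory

/-- Truncated L² norm on [0, L]. -/
noncomputable def nrm (f : ℝ → ℝ) (L : ℝ) : ℝ :=
  Real.sqrt (∫ x in (0:ℝ)..L, (f x)^2)

theorem stmt9 (φm φp : ℝ → ℝ) (β c : ℝ) (hβ0 : 0 < β) (hβ1 : β ≤ 1) (hc : 0 < c)
    (hreg : ∀ ε > (0:ℝ), ∃ C₁ > (0:ℝ), ∀ᶠ L in atTop, nrm φm L ≤ C₁ * L ^ (1/2 + ε))
    (hwron : ∀ᶠ L in atTop, c * (L - 1) ≤ nrm φm L * nrm φp L)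
    (hsub : ∀ β' < β, ∀ᶠ L in atTop, nrm φp L ^ β' ≤ nrm φm L) :
    ∀ ε' > (0:ℝ), ∃ C₂ > (0:ℝ), ∃ C₃ > (0:ℝ), ∃ C₄ > (0:ℝ),
      ∀ᶠ L in atTop,
        C₂ * L ^ (1 - 1/(2*β) - ε') ≤ nrm φm L ∧
        nrm φp L ≤ C₃ * L ^ (1/(2*β) + ε') ∧
        C₄ * L ^ (1/2 - ε') ≤ nrm φp L := by
  intro ε' hε'
  have h1 : (0:ℝ) < 1 + β * ε' := by positivity
  set β' : ℝ := β / (1 + β * ε') with hβ'def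
  have hβ'pos : 0 < β' := div_pos hβ0 h1
  have hβ'lt : β' < β := by
    rw [hβ'def, div_lt_iff₀ h1]
    nlinarith [mul_pos (mul_pos hβ0 hβ0) hε']
  set ε : ℝ := min (β' * ε' / 2) ε' with hεdef
  have hεpos : 0 < ε := lt_min (by positivity) hε'
  have hεle : ε ≤ ε' := min_le_right _ _
  have hεle2 : ε ≤ β' * ε' / 2 := min_le_left _ _
  obtain ⟨C₁, hC₁, hreg'⟩ := hreg ε hεpos
  -- exponent inequality
  have hexp : (1/2 + ε) * (1/β') ≤ 1/(2*β) + ε' := by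
    have h2 : ε * ((1 + β * ε') * 2) ≤ β * ε' := by
      rw [hβ'def, div_mul_eq_mul_div, div_div] at hεle2
      exact (le_div_iff₀ (by positivity)).mp hεle2
    rw [hβ'def, one_div_div]
    have h12 : 1/(2*β) * β = 1/2 := by field_simp
    have key : (1/2 + ε) * (1 + β * ε') ≤ (1/(2*β) + ε') * β := by nlinarith
    calc (1/2 + ε) * ((1 + β * ε')/β) = (1/2 + ε) * (1 + β * ε')/β := by ring
      _ ≤ ((1/(2*β) + ε') * β)/β := by gcongr
      _ = 1/(2*β) + ε' := by field_simp
  set C₃ : ℝ := C₁ ^ (1/β') with hC₃def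
  have hC₃ : 0 < C₃ := Real.rpow_pos_of_pos hC₁ _
  set C₂ : ℝ := c / (2 * C₃) with hC₂def
  have hC₂ : 0 < C₂ := by positivity
  set C₄ : ℝ := c / (2 * C₁) with hC₄def
  have hC₄ : 0 < C₄ := by positivity
  refine ⟨C₂, hC₂, C₃, hC₃, C₄, hC₄, ?_⟩
  filter_upwards [hreg', hwron, hsub β' hβ'lt, eventually_ge_atTop (2:ℝ)]
    with L hLreg hLw hLsub hL2
  have hL1 : (1:ℝ) ≤ L := by linarith
  have hLpos : (0:ℝ) < L := by linarith
  have hmnn : 0 ≤ nrm φm L := Real.sqrt_nonneg _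
  have hpnn : 0 ≤ nrm φp L := Real.sqrt_nonneg _
  have hprodpos : 0 < nrm φm L * nrm φp L := by
    have hLm1 : (0:ℝ) < L - 1 := by linarith
    have h : (0:ℝ) < c * (L - 1) := by positivity
    linarith
  -- upper bound on φp
  have hpub : nrm φp L ≤ C₃ * L ^ (1/(2*β) + ε') := by
    have h2 : nrm φp L ≤ (nrm φm L) ^ (1/β') := by
      have h3 := Real.rpow_le_rpow (Real.rpow_nonneg hpnn _) hLsub
        (le_of_lt (by positivity : (0:ℝ) < 1/β'))
      rwa [← Real.rpow_mul hpnn, mul_one_div, div_self hβ'pos.ne',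
        Real.rpow_one] at h3
    have h4 : (nrm φm L) ^ (1/β') ≤ (C₁ * L ^ (1/2 + ε)) ^ (1/β') :=
      Real.rpow_le_rpow hmnn hLreg (by positivity)
    have h5 : (C₁ * L ^ (1/2 + ε)) ^ (1/β')
        = C₃ * L ^ ((1/2 + ε) * (1/β')) := by
      rw [Real.mul_rpow hC₁.le (Real.rpow_nonneg hLpos.le _),
        ← Real.rpow_mul hLpos.le]
    have h6 : L ^ ((1/2 + ε) * (1/β')) ≤ L ^ (1/(2*β) + ε') :=
      Real.rpow_le_rpow_of_exponent_le hL1 hexp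
    calc nrm φp L ≤ (nrm φm L) ^ (1/β') := h2
      _ ≤ C₃ * L ^ ((1/2 + ε) * (1/β')) := by rw [← h5]; exact h4
      _ ≤ C₃ * L ^ (1/(2*β) + ε') := by
          exact mul_le_mul_of_nonneg_left h6 hC₃.le
  refine ⟨?_, hpub, ?_⟩
  -- lower bound on φm
  · have hX : 0 < C₃ * L ^ (1/(2*β) + ε') := by positivity
    have hLab : L ^ (1 - 1/(2*β) - ε') * L ^ (1/(2*β) + ε') = L := by
      rw [← Real.rpow_add hLpos]
      norm_num
    have step : C₂ * L ^ (1 - 1/(2*β) - ε') * (C₃ * L ^ (1/(2*β) + ε'))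
        ≤ nrm φm L * (C₃ * L ^ (1/(2*β) + ε')) := by
      have e : C₂ * L ^ (1 - 1/(2*β) - ε') * (C₃ * L ^ (1/(2*β) + ε'))
          = (c/2) * (L ^ (1 - 1/(2*β) - ε') * L ^ (1/(2*β) + ε')) := by
        rw [hC₂def]; field_simp
      rw [e, hLab]
      have h2c : c * 2 ≤ c * L := mul_le_mul_of_nonneg_left hL2 hc.le
      calc (c/2) * L ≤ c * (L - 1) := by linarith
        _ ≤ nrm φm L * nrm φp L := hLw
        _ ≤ nrm φm L * (C₃ * L ^ (1/(2*β) + ε')) :=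
            mul_le_mul_of_nonneg_left hpub hmnn
    exact le_of_mul_le_mul_right step hX
  -- lower bound on φp
  · have hY : 0 < C₁ * L ^ (1/2 + ε) := by positivity
    have hLab : L ^ (1/2 - ε') * L ^ (1/2 + ε) = L ^ (1 + ε - ε') := by
      rw [← Real.rpow_add hLpos]; ring_nf
    have hle1 : L ^ (1 + ε - ε') ≤ L := by
      nth_rewrite 2 [← Real.rpow_one L]
      exact Real.rpow_le_rpow_of_exponent_le hL1 (by linarith)
    have step : C₄ * L ^ (1/2 - ε') * (C₁ * L ^ (1/2 + ε))
        ≤ nrm φp L * (C₁ * L ^ (1/2 + ε)) := by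
      have e : C₄ * L ^ (1/2 - ε') * (C₁ * L ^ (1/2 + ε))
          = (c/2) * (L ^ (1/2 - ε') * L ^ (1/2 + ε)) := by
        rw [hC₄def]; field_simp
      rw [e, hLab]
      have h2c : c * 2 ≤ c * L := mul_le_mul_of_nonneg_left hL2 hc.le
      calc (c/2) * L ^ (1 + ε - ε') ≤ (c/2) * L :=
            mul_le_mul_of_nonneg_left hle1 (by positivity)
        _ ≤ c * (L - 1) := by linarith
        _ ≤ nrm φm L * nrm φp L := hLw
        _ ≤ (C₁ * L ^ (1/2 + ε)) * nrm φp L :=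
            mul_le_mul_of_nonneg_right hLreg hpnn
        _ = nrm φp L * (C₁ * L ^ (1/2 + ε)) := mul_comm _ _
    exact le_of_mul_le_mul_right step hY
end
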